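/- For all real numbers s > 0, p > 0 and α > 2, 2π ∫_0^∞ (1 - 1/(1 + s p x^{-α})) x dx = (s p)^{2/α} · ζ(α), where ζ(α) = (2π²/α) · csc(2π/α). Consequently, the Laplace transform of the total interference from a full-plane homogeneous PPP of intensity λ with transmit power p and Rayleigh fading is exp(-λ s^{2/α} p^{2/α} ζ(α)). -/

import Mathlib

/-!
With `c = s p`, the integrand is `c x / (c + x^α)`. The scaling `x = c^{1/α} y` extracts the
factor `c^{2/α}` and leaves `∫_0^∞ y / (1 + y^α) dy`; the substitution `t = y^α` turns this into
`α⁻¹ ∫_0^∞ t^{a-1} / (1 + t) dt` with `a = 2/α ∈ (0,1)`, and `x = t / (1 + t)` identifies the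
latter with the Beta integral `B(a, 1 - a) = Γ(a) Γ(1 - a) = π / sin(π a)`.
-/

open MeasureTheory Real Set

/-- ζ(α) = (2π²/α) · csc(2π/α). -/
noncomputable def zetaPL (α : ℝ) : ℝ :=
  (2 * Real.pi ^ 2 / α) * (Real.sin (2 * Real.pi / α))⁻¹

theorem integral_rpow_mul_one_sub_rpow {u v : ℝ} (hu : 0 < u) (hv : 0 < v) :
    ∫ x in (0 : ℝ)..1, x ^ (u - 1) * (1 - x) ^ (v - 1) = Gamma u * Gamma v / Gamma (u + v) := by
  have hB := Complex.betaIntegral_eq_Gamma_mul_div u v (by simpa) (by simpa)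
  rw [Complex.betaIntegral] at hB
  have hcast : ∫ x in (0 : ℝ)..1, (x : ℂ) ^ ((u : ℂ) - 1) * (1 - (x : ℂ)) ^ ((v : ℂ) - 1) =
      ((∫ x in (0 : ℝ)..1, x ^ (u - 1) * (1 - x) ^ (v - 1) : ℝ) : ℂ) := by
    rw [← intervalIntegral.integral_ofReal]
    refine intervalIntegral.integral_congr fun x hx => ?_
    rw [uIcc_of_le zero_le_one] at hx
    push_cast [Complex.ofReal_cpow hx.1, Complex.ofReal_cpow (sub_nonneg.2 hx.2)]
    rfl
  rw [hcast, ← Complex.ofReal_add, Complex.Gamma_ofReal, Complex.Gamma_ofReal,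
    Complex.Gamma_ofReal] at hB
  exact_mod_cast hB

theorem integral_Ioi_rpow_mul_one_add_rpow {u v : ℝ} (hu : 0 < u) (hv : 0 < v) :
    ∫ t in Ioi (0 : ℝ), t ^ (u - 1) * (1 + t) ^ (-(u + v)) = Gamma u * Gamma v / Gamma (u + v) := by
  have hmono : StrictMonoOn (fun t : ℝ => t / (1 + t)) (Ioi 0) := by
    intro t ht r hr htr
    simp only [mem_Ioi] at ht hr
    rw [div_lt_div_iff₀ (by linarith) (by linarith)]
    linarith
  have himage : (fun t : ℝ => t / (1 + t)) '' Ioi 0 = Ioo 0 1 := by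
    ext x
    constructor
    · rintro ⟨t, ht, rfl⟩
      simp only [mem_Ioi] at ht
      exact ⟨by positivity, (div_lt_one (by linarith)).2 (by linarith)⟩
    · rintro ⟨hx0, hx1⟩
      refine ⟨x / (1 - x), div_pos hx0 (by linarith), ?_⟩
      field_simp [(by linarith : (1 : ℝ) - x ≠ 0)]
      ring
  have hderiv : ∀ t ∈ Ioi (0 : ℝ),
      HasDerivWithinAt (fun t : ℝ => t / (1 + t)) (((1 + t) ^ 2)⁻¹) (Ioi 0) t := by
    intro t ht
    have h1t : (1 : ℝ) + t ≠ 0 := by simp only [mem_Ioi] at ht; linarith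
    exact ((hasDerivAt_id' t).div ((hasDerivAt_id' t).const_add 1) h1t).hasDerivWithinAt.congr_deriv
      (by field_simp; ring)
  have hsub := integral_image_eq_integral_abs_deriv_smul measurableSet_Ioi hderiv hmono.injOn
    (fun x => x ^ (u - 1) * (1 - x) ^ (v - 1))
  rw [himage, ← integral_Ioc_eq_integral_Ioo, ← intervalIntegral.integral_of_le zero_le_one,
    integral_rpow_mul_one_sub_rpow hu hv] at hsub
  rw [hsub]
  refine setIntegral_congr_fun measurableSet_Ioi fun t ht => ?_
  simp only [mem_Ioi] at ht
  have h1t : (0 : ℝ) < 1 + t := by linarith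
  have hsplit : (1 + t) ^ (u + v) = (1 + t) ^ 2 * (1 + t) ^ (u - 1) * (1 + t) ^ (v - 1) := by
    rw [← rpow_natCast, ← rpow_add h1t, ← rpow_add h1t]
    ring_nf
  have hcompl : 1 - t / (1 + t) = (1 + t)⁻¹ := by field_simp; ring
  rw [abs_of_pos (by positivity), smul_eq_mul, hcompl, div_rpow ht.le h1t.le,
    inv_rpow h1t.le, rpow_neg h1t.le, hsplit]
  field_simp

theorem integral_Ioi_rpow_div_one_add {a : ℝ} (ha0 : 0 < a) (ha1 : a < 1) :
    ∫ t in Ioi (0 : ℝ), t ^ (a - 1) / (1 + t) = π / sin (π * a) := by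
  have h := integral_Ioi_rpow_mul_one_add_rpow ha0 (sub_pos.2 ha1)
  rw [add_sub_cancel, Gamma_one, div_one, Gamma_mul_Gamma_one_sub] at h
  rw [← h]
  refine setIntegral_congr_fun measurableSet_Ioi fun t _ => ?_
  rw [rpow_neg_one, div_eq_mul_inv]

theorem integral_Ioi_rpow_div_one_add_rpow {α β : ℝ} (hβ : 0 < β) (hβα : β < α) :
    ∫ x in Ioi (0 : ℝ), x ^ (β - 1) / (1 + x ^ α) = π / (α * sin (π * β / α)) := by
  have hα : 0 < α := hβ.trans hβα
  calc ∫ x in Ioi (0 : ℝ), x ^ (β - 1) / (1 + x ^ α)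
      = ∫ x in Ioi (0 : ℝ), (α * x ^ (α - 1)) • (α⁻¹ * ((x ^ α) ^ (β / α - 1) / (1 + x ^ α))) := by
        refine setIntegral_congr_fun measurableSet_Ioi fun x hx => ?_
        have hx : 0 < x := hx
        have hpow : x ^ (α - 1) * (x ^ α) ^ (β / α - 1) = x ^ (β - 1) := by
          rw [← rpow_mul hx.le, ← rpow_add hx]
          congr 1
          field_simp
          ring
        rw [smul_eq_mul, ← hpow]
        field_simp
    _ = ∫ t in Ioi (0 : ℝ), α⁻¹ * (t ^ (β / α - 1) / (1 + t)) :=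
        integral_comp_rpow_Ioi_of_pos (g := fun t => α⁻¹ * (t ^ (β / α - 1) / (1 + t))) hα
    _ = π / (α * sin (π * β / α)) := by
        rw [integral_const_mul, integral_Ioi_rpow_div_one_add (by positivity)
          ((div_lt_one hα).2 hβα), mul_div_assoc]
        field_simp

theorem integral_Ioi_one_sub_one_div_one_add_mul_rpow_neg_mul {c α : ℝ} (hc : 0 < c)
    (hα : 2 < α) :
    ∫ x in Ioi (0 : ℝ), (1 - 1 / (1 + c * x ^ (-α))) * x =
      c ^ (2 / α) * (π / (α * sin (2 * π / α))) := by
  have hα0 : α ≠ 0 := by positivity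
  set b := c ^ (1 / α) with hb
  have hb0 : 0 < b := by positivity
  have hscale := integral_comp_mul_left_Ioi' (fun x => (1 - 1 / (1 + c * x ^ (-α))) * x) 0 hb0
  rw [mul_zero] at hscale
  rw [← hscale, smul_eq_mul]
  have hpoint : ∀ y ∈ Ioi (0 : ℝ),
      (1 - 1 / (1 + c * (b * y) ^ (-α))) * (b * y) = b * (y ^ ((2 : ℝ) - 1) / (1 + y ^ α)) := by
    intro y hy
    have hy : 0 < y := hy
    have hbα : c * b ^ (-α) = 1 := by
      rw [hb, ← rpow_mul hc.le, one_div, inv_mul_eq_div, neg_div, div_self hα0, rpow_neg_one,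
        mul_inv_cancel₀ hc.ne']
    rw [mul_rpow hb0.le hy.le, ← mul_assoc c, hbα, one_mul, rpow_neg hy.le,
      show (2 : ℝ) - 1 = 1 by norm_num, rpow_one]
    field_simp
    ring
  rw [setIntegral_congr_fun measurableSet_Ioi hpoint, integral_const_mul,
    integral_Ioi_rpow_div_one_add_rpow two_pos hα, ← mul_assoc, ← rpow_add hc]
  ring_nf

/-- For s > 0, p > 0, α > 2:
`2π ∫_0^∞ (1 - 1/(1 + s p x^{-α})) x dx = (s p)^{2/α} ζ(α)`, and consequently the
Laplace transform of the full-plane PPP interference with intensity λ is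
`exp(-λ s^{2/α} p^{2/α} ζ(α))`. -/
theorem full_plane_interference_laplace (s p α : ℝ)
    (hs : 0 < s) (hp : 0 < p) (hα : 2 < α) :
    (2 * Real.pi * ∫ x in Set.Ioi (0 : ℝ), (1 - 1 / (1 + s * p * x ^ (-α))) * x =
      (s * p) ^ (2 / α) * zetaPL α) ∧
    ∀ lam : ℝ, 0 < lam →
      Real.exp (-(lam *
          (2 * Real.pi * ∫ x in Set.Ioi (0 : ℝ), (1 - 1 / (1 + s * p * x ^ (-α))) * x))) =
        Real.exp (-(lam * s ^ (2 / α) * p ^ (2 / α) * zetaPL α)) := by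
  have hexponent : 2 * π * ∫ x in Ioi (0 : ℝ), (1 - 1 / (1 + s * p * x ^ (-α))) * x =
      (s * p) ^ (2 / α) * zetaPL α := by
    rw [integral_Ioi_one_sub_one_div_one_add_mul_rpow_neg_mul (mul_pos hs hp) hα, zetaPL]
    ring
  refine ⟨hexponent, fun lam _ => ?_⟩
  rw [hexponent, mul_rpow hs.le hp.le]
  ring_nf
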